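/- arXiv:1806.09988 — 10 statements merged into one kernel-verified Lean document; each statement's English description precedes it below -/
import Mathlib

section
/- If A is a nonsingular n×n real matrix and Δ ≥ 0 satisfies ρ(|A⁻¹|Δ) < 1, where |A⁻¹| denotes the entrywise absolute value and ρ the spectral radius, then every matrix M with |M − A| ≤ Δ entrywise is nonsingular. -/
open Matrix
open scoped ENNReal NNReal

noncomputable def specRad {n : ℕ} (M : Matrix (Fin n) (Fin n) ℝ) : ℝ :=
  sSup {r : ℝ | ∃ μ ∈ spectrum ℂ (M.map (fun x => (x : ℂ))), r = ‖μ‖}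

section Aux

attribute [local instance] Matrix.linftyOpNormedRing Matrix.linftyOpNormedAlgebra
  Matrix.linftyOpNormedSpace

open Filter Topology

lemma nnnorm_map_complex {n : ℕ} (B : Matrix (Fin n) (Fin n) ℝ) :
    ‖B.map (fun x => (x : ℂ))‖₊ = ‖B‖₊ := by
  simp [Matrix.linfty_opNNNorm_def, Matrix.map_apply]

/-- mulVec by a nonneg matrix is monotone -/
lemma mulVec_mono {n : ℕ} {P : Matrix (Fin n) (Fin n) ℝ} (hP : ∀ i j, 0 ≤ P i j)
    {u w : Fin n → ℝ} (h : ∀ i, u i ≤ w i) : ∀ i, (P *ᵥ u) i ≤ (P *ᵥ w) i := by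
  intro i
  simp only [Matrix.mulVec, dotProduct]
  apply Finset.sum_le_sum
  intro j _
  exact mul_le_mul_of_nonneg_left (h j) (hP i j)

lemma pow_nonneg_entries {n : ℕ} {P : Matrix (Fin n) (Fin n) ℝ} (hP : ∀ i j, 0 ≤ P i j) :
    ∀ (k : ℕ) (i j : Fin n), 0 ≤ (P ^ k) i j := by
  intro k
  induction k with
  | zero => intro i j; simp [Matrix.one_apply]; positivity
  | succ m ih =>
    intro i j
    rw [pow_succ, Matrix.mul_apply]
    exact Finset.sum_nonneg fun l _ => mul_nonneg (ih i l) (hP l j)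

lemma key_vanish {n : ℕ} (C : Matrix (Fin n) (Fin n) ℝ) (hC : ∀ i j, 0 ≤ C i j)
    (hρ : specRad C < 1) (v : Fin n → ℝ) (hv0 : ∀ i, 0 ≤ v i)
    (hvC : ∀ i, v i ≤ (C *ᵥ v) i) : v = 0 := by
  set Cc : Matrix (Fin n) (Fin n) ℂ := C.map (fun x => (x : ℂ)) with hCc
  -- spectral radius bound
  have hbdd : BddAbove {r : ℝ | ∃ μ ∈ spectrum ℂ Cc, r = ‖μ‖} := by
    have hcpt : IsCompact (spectrum ℂ Cc) := spectrum.isCompact Cc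
    have : {r : ℝ | ∃ μ ∈ spectrum ℂ Cc, r = ‖μ‖} = (fun μ : ℂ => ‖μ‖) '' spectrum ℂ Cc := by
      ext r; simp [eq_comm, Set.mem_image]
    rw [this]
    exact (hcpt.image continuous_norm).bddAbove
  have hsub : spectralRadius ℂ Cc < 1 := by
    have h1 : spectralRadius ℂ Cc ≤ ENNReal.ofReal (specRad C) := by
      apply iSup₂_le
      intro μ hμ
      have : ‖μ‖ ≤ specRad C := le_csSup hbdd ⟨μ, hμ, rfl⟩
      calc (‖μ‖₊ : ℝ≥0∞) = ENNReal.ofReal ‖μ‖ := (ofReal_norm μ).symm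
        _ ≤ ENNReal.ofReal (specRad C) := ENNReal.ofReal_le_ofReal this
    exact lt_of_le_of_lt h1 (by exact ENNReal.ofReal_lt_one.mpr hρ)
  -- Gelfand's formula gives a power with small norm
  have hG := spectrum.pow_nnnorm_pow_one_div_tendsto_nhds_spectralRadius Cc
  have hev : ∀ᶠ k : ℕ in atTop, (‖Cc ^ k‖₊ : ℝ≥0∞) ^ (1 / (k : ℝ)) < 1 :=
    hG.eventually_lt_const hsub
  obtain ⟨k, hk1, hk⟩ : ∃ k : ℕ, 1 ≤ k ∧ (‖Cc ^ k‖₊ : ℝ≥0∞) ^ (1 / (k : ℝ)) < 1 := by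
    obtain ⟨k, hk⟩ := (hev.and (eventually_ge_atTop 1)).exists
    exact ⟨k, hk.2, hk.1⟩
  have hnk : (‖Cc ^ k‖₊ : ℝ≥0∞) < 1 := by
    by_contra h
    push_neg at h
    have : (1 : ℝ≥0∞) ≤ (‖Cc ^ k‖₊ : ℝ≥0∞) ^ (1 / (k : ℝ)) :=
      ENNReal.one_le_rpow h (by positivity)
    exact absurd hk (not_lt.mpr this)
  -- transfer to real matrix
  have hmap : Cc ^ k = (C ^ k).map (fun x => (x : ℂ)) := by
    have : Cc = (Complex.ofRealHom.mapMatrix : Matrix (Fin n) (Fin n) ℝ →+* _) C := rfl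
    rw [this, ← map_pow]; rfl
  have hCk : ‖C ^ k‖ < 1 := by
    have : ‖C ^ k‖₊ < 1 := by
      rw [← nnnorm_map_complex, ← hmap]
      exact_mod_cast hnk
    exact_mod_cast this
  -- v ≤ C^m v for all m
  have hpow : ∀ m : ℕ, ∀ i, v i ≤ ((C ^ m) *ᵥ v) i := by
    intro m
    induction m with
    | zero => intro i; simp
    | succ m ih =>
      intro i
      calc v i ≤ ((C ^ m) *ᵥ v) i := ih i
        _ ≤ ((C ^ m) *ᵥ (C *ᵥ v)) i := mulVec_mono (pow_nonneg_entries hC m) hvC i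
        _ = ((C ^ (m + 1)) *ᵥ v) i := by rw [Matrix.mulVec_mulVec, ← pow_succ]
  -- norm contradiction
  have hnv : ‖v‖ ≤ ‖(C ^ k) *ᵥ v‖ := by
    apply pi_norm_le_iff_of_nonneg (norm_nonneg _) |>.mpr
    intro i
    calc ‖v i‖ = v i := Real.norm_of_nonneg (hv0 i)
      _ ≤ ((C ^ k) *ᵥ v) i := hpow k i
      _ ≤ ‖((C ^ k) *ᵥ v) i‖ := le_abs_self _
      _ ≤ ‖(C ^ k) *ᵥ v‖ := norm_le_pi_norm _ i
  have hmul : ‖(C ^ k) *ᵥ v‖ ≤ ‖C ^ k‖ * ‖v‖ := Matrix.linfty_opNorm_mulVec _ _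
  by_contra hvne
  have hvpos : 0 < ‖v‖ := norm_pos_iff.mpr hvne
  have : ‖v‖ < ‖v‖ := by
    calc ‖v‖ ≤ ‖C ^ k‖ * ‖v‖ := hnv.trans hmul
      _ < 1 * ‖v‖ := by exact mul_lt_mul_of_pos_right hCk hvpos
      _ = ‖v‖ := one_mul _
  exact lt_irrefl _ this

end Aux

theorem regular_of_specRad_lt_one {n : ℕ} (A Δ : Matrix (Fin n) (Fin n) ℝ)
    (hA : A.det ≠ 0) (hΔ : ∀ i j, 0 ≤ Δ i j)
    (hρ : specRad ((A⁻¹).map (fun x => |x|) * Δ) < 1) :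
    ∀ M : Matrix (Fin n) (Fin n) ℝ, (∀ i j, |M i j - A i j| ≤ Δ i j) → M.det ≠ 0 := by
  intro M hM hdet
  obtain ⟨x, hx0, hx⟩ := (Matrix.exists_mulVec_eq_zero_iff).mpr hdet
  set C : Matrix (Fin n) (Fin n) ℝ := (A⁻¹).map (fun x => |x|) * Δ with hCdef
  have hC : ∀ i j, 0 ≤ C i j := by
    intro i j
    rw [hCdef, Matrix.mul_apply]
    exact Finset.sum_nonneg fun l _ => mul_nonneg (abs_nonneg _) (hΔ l j)
  -- x = (A⁻¹ * (A - M)) *ᵥ x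
  have hfix : (A⁻¹ * (A - M)) *ᵥ x = x := by
    have h1 : (A - M) *ᵥ x = A *ᵥ x := by
      rw [Matrix.sub_mulVec, hx, sub_zero]
    rw [← Matrix.mulVec_mulVec, h1, Matrix.mulVec_mulVec,
      Matrix.nonsing_inv_mul A (isUnit_iff_ne_zero.mpr hA), Matrix.one_mulVec]
  set v : Fin n → ℝ := fun i => |x i| with hvdef
  have hvC : ∀ i, v i ≤ (C *ᵥ v) i := by
    intro i
    have hB : ∀ j, |(A⁻¹ * (A - M)) i j| ≤ C i j := by
      intro j
      rw [Matrix.mul_apply]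
      calc |∑ l, A⁻¹ i l * (A - M) l j| ≤ ∑ l, |A⁻¹ i l * (A - M) l j| :=
            Finset.abs_sum_le_sum_abs _ _
        _ ≤ ∑ l, |A⁻¹ i l| * Δ l j := by
            apply Finset.sum_le_sum
            intro l _
            rw [abs_mul]
            apply mul_le_mul_of_nonneg_left _ (abs_nonneg _)
            have : |(A - M) l j| = |M l j - A l j| := by
              rw [Matrix.sub_apply, abs_sub_comm]
            rw [this]; exact hM l j
        _ = C i j := by rw [hCdef, Matrix.mul_apply]; simp [Matrix.map_apply]
    calc v i = |((A⁻¹ * (A - M)) *ᵥ x) i| := by rw [hfix]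
      _ = |∑ j, (A⁻¹ * (A - M)) i j * x j| := rfl
      _ ≤ ∑ j, |(A⁻¹ * (A - M)) i j * x j| := Finset.abs_sum_le_sum_abs _ _
      _ ≤ ∑ j, C i j * v j := by
          apply Finset.sum_le_sum
          intro j _
          rw [abs_mul]
          exact mul_le_mul_of_nonneg_right (hB j) (abs_nonneg _)
      _ = (C *ᵥ v) i := rfl
  have hveq : v = 0 := key_vanish C hC hρ v (fun i => abs_nonneg _) hvC
  apply hx0
  funext i
  have : |x i| = 0 := congrFun hveq i
  simpa using abs_eq_zero.mp this
end

section
/- If A is a nonsingular n×n real matrix and Δ ≥ 0, and σ_n(A) > σ_1(Δ), where σ_n(A) is the smallest singular value of A and σ_1(Δ) is the largest singular value of Δ, then every matrix M with |M − A| ≤ Δ entrywise is nonsingular. -/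
/-!
If `M` lies in the interval matrix and `M x = 0` with `x ≠ 0`, then `A x = (A - M) x`, so entrywise
`|A x| ≤ Δ |x|`. Comparing Rayleigh quotients gives
`σₙ(A)² ‖x‖² ≤ ‖A x‖² ≤ ‖Δ |x|‖² ≤ σ₁(Δ)² ‖x‖²`, hence `σₙ(A) ≤ σ₁(Δ)`.
The Rayleigh bounds come from `B - c • 1` (resp. `C • 1 - B`) being positive semidefinite
whenever `c` (resp. `C`) bounds the spectrum of the symmetric matrix `B`.
-/

open Matrix
open scoped ENNReal NNReal

noncomputable def sigmaMin {n : ℕ} (A : Matrix (Fin n) (Fin n) ℝ) : ℝ :=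
  Real.sqrt (sInf (spectrum ℝ (Aᵀ * A)))

noncomputable def sigmaMax {n : ℕ} (A : Matrix (Fin n) (Fin n) ℝ) : ℝ :=
  Real.sqrt (sSup (spectrum ℝ (Aᵀ * A)))

namespace Matrix

variable {m n : Type*} [Fintype n]

section Rayleigh

variable [Fintype m]

omit [Fintype n] in
lemma isHermitian_transpose_mul_self (A : Matrix m n ℝ) : (Aᵀ * A).IsHermitian := by
  simpa using isHermitian_conjTranspose_mul_self A

lemma dotProduct_transpose_mul_self_mulVec (A : Matrix m n ℝ) (x : n → ℝ) :
    x ⬝ᵥ (Aᵀ * A) *ᵥ x = (A *ᵥ x) ⬝ᵥ (A *ᵥ x) := by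
  rw [← mulVec_mulVec, dotProduct_mulVec, vecMul_transpose]

variable [DecidableEq n]

lemma isHermitian_algebraMap_real (c : ℝ) : (algebraMap ℝ (Matrix n n ℝ) c).IsHermitian := by
  rw [algebraMap_eq_diagonal]
  exact isHermitian_diagonal _

lemma IsHermitian.mul_dotProduct_self_le_dotProduct_mulVec {B : Matrix n n ℝ}
    (hB : B.IsHermitian) {c : ℝ} (hc : ∀ μ ∈ spectrum ℝ B, c ≤ μ) (x : n → ℝ) :
    c * (x ⬝ᵥ x) ≤ x ⬝ᵥ B *ᵥ x := by
  have hpos : (B - algebraMap ℝ _ c).PosSemidef := by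
    refine posSemidef_iff_isHermitian_and_spectrum_nonneg.mpr
      ⟨hB.sub (isHermitian_algebraMap_real c), ?_⟩
    rw [← spectrum.sub_singleton_eq]
    rintro _ ⟨μ, hμ, _, rfl, rfl⟩
    exact sub_nonneg.mpr (hc μ hμ)
  have := hpos.dotProduct_mulVec_nonneg x
  rw [Algebra.algebraMap_eq_smul_one, star_trivial, sub_mulVec, dotProduct_sub, smul_mulVec,
    one_mulVec, dotProduct_smul, smul_eq_mul] at this
  linarith

lemma IsHermitian.dotProduct_mulVec_le_mul_dotProduct_self {B : Matrix n n ℝ}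
    (hB : B.IsHermitian) {C : ℝ} (hC : ∀ μ ∈ spectrum ℝ B, μ ≤ C) (x : n → ℝ) :
    x ⬝ᵥ B *ᵥ x ≤ C * (x ⬝ᵥ x) := by
  have hpos : (algebraMap ℝ _ C - B).PosSemidef := by
    refine posSemidef_iff_isHermitian_and_spectrum_nonneg.mpr
      ⟨(isHermitian_algebraMap_real C).sub hB, ?_⟩
    rw [← spectrum.singleton_sub_eq]
    rintro _ ⟨_, rfl, μ, hμ, rfl⟩
    exact sub_nonneg.mpr (hC μ hμ)
  have := hpos.dotProduct_mulVec_nonneg x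
  rw [Algebra.algebraMap_eq_smul_one, star_trivial, sub_mulVec, dotProduct_sub, smul_mulVec,
    one_mulVec, dotProduct_smul, smul_eq_mul] at this
  linarith

lemma sInf_spectrum_transpose_mul_self_mul_le (A : Matrix m n ℝ) (x : n → ℝ) :
    sInf (spectrum ℝ (Aᵀ * A)) * (x ⬝ᵥ x) ≤ (A *ᵥ x) ⬝ᵥ (A *ᵥ x) := by
  rw [← dotProduct_transpose_mul_self_mulVec]
  exact (isHermitian_transpose_mul_self A).mul_dotProduct_self_le_dotProduct_mulVec
    (fun _ hμ ↦ csInf_le finite_real_spectrum.bddBelow hμ) x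

lemma dotProduct_mulVec_self_le_sSup_spectrum_mul (A : Matrix m n ℝ) (x : n → ℝ) :
    (A *ᵥ x) ⬝ᵥ (A *ᵥ x) ≤ sSup (spectrum ℝ (Aᵀ * A)) * (x ⬝ᵥ x) := by
  rw [← dotProduct_transpose_mul_self_mulVec]
  exact (isHermitian_transpose_mul_self A).dotProduct_mulVec_le_mul_dotProduct_self
    (fun _ hμ ↦ le_csSup finite_real_spectrum.bddAbove hμ) x

end Rayleigh

lemma abs_mulVec_le_mulVec_abs {E Δ : Matrix m n ℝ} (hE : ∀ i j, |E i j| ≤ Δ i j) (x : n → ℝ) :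
    |E *ᵥ x| ≤ Δ *ᵥ |x| := fun i ↦
  calc |∑ j, E i j * x j| ≤ ∑ j, |E i j * x j| := Finset.abs_sum_le_sum_abs _ _
    _ ≤ ∑ j, Δ i j * |x j| := by
      gcongr with j
      rw [abs_mul]
      exact mul_le_mul_of_nonneg_right (hE i j) (abs_nonneg _)

lemma dotProduct_self_le_of_abs_le {u v : n → ℝ} (h : |u| ≤ v) : u ⬝ᵥ u ≤ v ⬝ᵥ v :=
  Finset.sum_le_sum fun i _ ↦ by
    simpa only [abs_mul_abs_self] using mul_self_le_mul_self (abs_nonneg (u i)) (h i)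

lemma abs_dotProduct_abs (x : n → ℝ) : |x| ⬝ᵥ |x| = x ⬝ᵥ x := by
  simp only [dotProduct, Pi.abs_apply, abs_mul_abs_self]

end Matrix

lemma sigmaMin_le_sigmaMax_of_mulVec_eq_zero {n : ℕ} {M A Δ : Matrix (Fin n) (Fin n) ℝ}
    (hM : ∀ i j, |M i j - A i j| ≤ Δ i j) {x : Fin n → ℝ} (hx : x ≠ 0) (hMx : M *ᵥ x = 0) :
    sigmaMin A ≤ sigmaMax Δ := by
  have hAx : |A *ᵥ x| ≤ Δ *ᵥ |x| := by
    have := abs_mulVec_le_mulVec_abs (E := M - A) (fun i j ↦ hM i j) x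
    rwa [sub_mulVec, hMx, zero_sub, abs_neg] at this
  have hxx : 0 < x ⬝ᵥ x := by simpa using (dotProduct_star_self_pos_iff (v := x)).mpr hx
  have key : sInf (spectrum ℝ (Aᵀ * A)) * (x ⬝ᵥ x) ≤ sSup (spectrum ℝ (Δᵀ * Δ)) * (x ⬝ᵥ x) :=
    calc _ ≤ (A *ᵥ x) ⬝ᵥ (A *ᵥ x) := sInf_spectrum_transpose_mul_self_mul_le A x
      _ ≤ (Δ *ᵥ |x|) ⬝ᵥ (Δ *ᵥ |x|) := dotProduct_self_le_of_abs_le hAx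
      _ ≤ sSup (spectrum ℝ (Δᵀ * Δ)) * (|x| ⬝ᵥ |x|) :=
        dotProduct_mulVec_self_le_sSup_spectrum_mul Δ |x|
      _ = _ := by rw [abs_dotProduct_abs]
  exact Real.sqrt_le_sqrt (le_of_mul_le_mul_right key hxx)

theorem regular_of_sigma_gt_general {n : ℕ} (A Δ : Matrix (Fin n) (Fin n) ℝ)
    (h : sigmaMax Δ < sigmaMin A) :
    ∀ M : Matrix (Fin n) (Fin n) ℝ, (∀ i j, |M i j - A i j| ≤ Δ i j) → M.det ≠ 0 := by
  intro M hM hdet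
  obtain ⟨x, hx, hMx⟩ := exists_mulVec_eq_zero_iff.mpr hdet
  exact (sigmaMin_le_sigmaMax_of_mulVec_eq_zero hM hx hMx).not_gt h

theorem regular_of_sigma_gt {n : ℕ} (A Δ : Matrix (Fin n) (Fin n) ℝ)
    (hA : A.det ≠ 0) (hΔ : ∀ i j, 0 ≤ Δ i j)
    (h : sigmaMax Δ < sigmaMin A) :
    ∀ M : Matrix (Fin n) (Fin n) ℝ, (∀ i j, |M i j - A i j| ≤ Δ i j) → M.det ≠ 0 :=
  regular_of_sigma_gt_general A Δ h
end

section
/- Lower spectral bound on the regularity radius: for nonsingular A and Δ ≥ 0, if δ < 1/ρ(|A⁻¹|Δ), then the interval matrix [A − δΔ, A + δΔ] is regular; hence d(A, Δ) ≥ 1/ρ(|A⁻¹|Δ). -/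
open Matrix
open scoped ENNReal NNReal

noncomputable def regRad {n : ℕ} (A Δ : Matrix (Fin n) (Fin n) ℝ) : ℝ≥0∞ :=
  ⨅ δ ∈ {δ : ℝ≥0 | ∃ M : Matrix (Fin n) (Fin n) ℝ,
      (∀ i j, |M i j - A i j| ≤ (δ : ℝ) * Δ i j) ∧ M.det = 0},
    (δ : ℝ≥0∞)

/-!
If a member `M` of `[A - δΔ, A + δΔ]` is singular, say `M x = 0` with `x ≠ 0`, then
`x = A⁻¹ (A - M) x`, hence `|x| ≤ δ |A⁻¹| Δ |x|`. For a nonnegative matrix `B` and a vector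
`0 ≤ y ≠ 0`, an inequality `r y ≤ B y` iterates to `r ^ k y ≤ B ^ k y`, so `r ^ k ≤ ‖B ^ k‖` in the
`ℓ∞` operator norm, and Gelfand's formula gives `r ≤ ρ(B)` (the Collatz–Wielandt bound). With
`r = 1/δ` and `B = |A⁻¹| Δ` this is `δ ρ(|A⁻¹| Δ) ≥ 1`.
-/

namespace Matrix

variable {m n R : Type*} [Fintype n]

section OrderedSemiring

variable [CommSemiring R] [PartialOrder R] [IsOrderedRing R]

theorem mulVec_mono_of_nonneg {B : Matrix m n R} (hB : ∀ i j, 0 ≤ B i j) {x y : n → R}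
    (h : x ≤ y) : B *ᵥ x ≤ B *ᵥ y := fun i =>
  Finset.sum_le_sum fun j _ => mul_le_mul_of_nonneg_left (h j) (hB i j)

theorem mulVec_le_mulVec_of_le {B C : Matrix m n R} (h : ∀ i j, B i j ≤ C i j) {x : n → R}
    (hx : 0 ≤ x) : B *ᵥ x ≤ C *ᵥ x := fun i =>
  Finset.sum_le_sum fun j _ => mul_le_mul_of_nonneg_right (h i j) (hx j)

theorem pow_smul_le_pow_mulVec [DecidableEq n] {B : Matrix n n R} (hB : ∀ i j, 0 ≤ B i j)
    {r : R} (hr : 0 ≤ r) {y : n → R} (h : r • y ≤ B *ᵥ y) (k : ℕ) :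
    r ^ k • y ≤ B ^ k *ᵥ y := by
  induction k with
  | zero => simp
  | succ k ih =>
    calc r ^ (k + 1) • y = r ^ k • r • y := by rw [pow_succ, mul_smul]
      _ ≤ r ^ k • (B *ᵥ y) := smul_le_smul_of_nonneg_left h (pow_nonneg hr k)
      _ = B *ᵥ (r ^ k • y) := (mulVec_smul B _ y).symm
      _ ≤ B *ᵥ (B ^ k *ᵥ y) := mulVec_mono_of_nonneg hB ih
      _ = B ^ (k + 1) *ᵥ y := by rw [mulVec_mulVec, ← pow_succ']

end OrderedSemiring

theorem abs_mulVec_le {R : Type*} [CommRing R] [LinearOrder R] [IsStrictOrderedRing R]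
    (B : Matrix m n R) (x : n → R) : |B *ᵥ x| ≤ B.map abs *ᵥ |x| := fun i =>
  calc |(B *ᵥ x) i| ≤ ∑ j, |B i j * x j| := Finset.abs_sum_le_sum_abs _ _
    _ = (B.map abs *ᵥ |x|) i := by simp [mulVec, dotProduct, abs_mul]

end Matrix

theorem le_spectralRadius_of_pow_le_nnnorm_pow {A : Type*} [NormedRing A] [NormedAlgebra ℂ A]
    [CompleteSpace A] {a : A} {r : ℝ≥0} (h : ∀ k : ℕ, r ^ k ≤ ‖a ^ k‖₊) :
    (r : ℝ≥0∞) ≤ spectralRadius ℂ a := by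
  refine ge_of_tendsto (spectrum.pow_nnnorm_pow_one_div_tendsto_nhds_spectralRadius a)
    (Filter.eventually_atTop.2 ⟨1, fun k hk => ?_⟩)
  calc (r : ℝ≥0∞) = ((r : ℝ≥0∞) ^ k) ^ (1 / k : ℝ) := by
        rw [one_div, ENNReal.pow_rpow_inv_natCast (by omega)]
    _ ≤ (‖a ^ k‖₊ : ℝ≥0∞) ^ (1 / k : ℝ) := by gcongr; exact_mod_cast h k

theorem Pi.norm_le_norm_of_nonneg_of_le {ι : Type*} [Fintype ι] {u v : ι → ℝ} (hu : 0 ≤ u)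
    (huv : u ≤ v) : ‖u‖ ≤ ‖v‖ :=
  (pi_norm_le_iff_of_nonneg (norm_nonneg v)).2 fun i =>
    calc ‖u i‖ = u i := Real.norm_of_nonneg (hu i)
      _ ≤ ‖v i‖ := (huv i).trans (Real.le_norm_self _)
      _ ≤ ‖v‖ := norm_le_pi_norm v i

open scoped Matrix.Norms.Operator

theorem Matrix.linfty_opNNNorm_map_ofReal {m n : Type*} [Fintype m] [Fintype n]
    (M : Matrix m n ℝ) : ‖M.map ((↑) : ℝ → ℂ)‖₊ = ‖M‖₊ := by
  simp [linfty_opNNNorm_def]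

theorem spectralRadius_map_ofReal_le_specRad {n : ℕ} (B : Matrix (Fin n) (Fin n) ℝ) :
    spectralRadius ℂ (B.map ((↑) : ℝ → ℂ)) ≤ ENNReal.ofReal (specRad B) := by
  have hbdd : BddAbove {r : ℝ | ∃ μ ∈ spectrum ℂ (B.map ((↑) : ℝ → ℂ)), r = ‖μ‖} := by
    obtain ⟨C, hC⟩ := (spectrum.isBounded (𝕜 := ℂ) (B.map ((↑) : ℝ → ℂ))).exists_norm_le
    exact ⟨C, by rintro _ ⟨μ, hμ, rfl⟩; exact hC μ hμ⟩
  refine iSup₂_le fun μ hμ => ?_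
  rw [← ENNReal.ofReal_coe_nnreal, coe_nnnorm]
  exact ENNReal.ofReal_le_ofReal (le_csSup hbdd ⟨μ, hμ, rfl⟩)

theorem specRad_nonneg {n : ℕ} (B : Matrix (Fin n) (Fin n) ℝ) : 0 ≤ specRad B :=
  Real.sSup_nonneg fun _ ⟨μ, _, hr⟩ => hr ▸ norm_nonneg μ

theorem le_specRad_of_smul_le_mulVec {n : ℕ} {B : Matrix (Fin n) (Fin n) ℝ}
    (hB : ∀ i j, 0 ≤ B i j) {y : Fin n → ℝ} (hy : 0 ≤ y) (hy0 : y ≠ 0) {r : ℝ≥0}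
    (h : (r : ℝ) • y ≤ B *ᵥ y) : (r : ℝ) ≤ specRad B := by
  have hpow : ∀ k : ℕ, r ^ k ≤ ‖B.map ((↑) : ℝ → ℂ) ^ k‖₊ := by
    intro k
    have hle := B.pow_smul_le_pow_mulVec hB r.2 h k
    have hy' : 0 < ‖y‖ := norm_pos_iff.2 hy0
    have hyk : (r : ℝ) ^ k * ‖y‖ ≤ ‖B ^ k‖ * ‖y‖ :=
      calc (r : ℝ) ^ k * ‖y‖ = ‖(r : ℝ) ^ k • y‖ := by
            rw [norm_smul, Real.norm_of_nonneg (by positivity)]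
        _ ≤ ‖B ^ k *ᵥ y‖ := Pi.norm_le_norm_of_nonneg_of_le (smul_nonneg (by positivity) hy) hle
        _ ≤ ‖B ^ k‖ * ‖y‖ := linfty_opNorm_mulVec _ _
    have hmap : B.map ((↑) : ℝ → ℂ) ^ k = (B ^ k).map (↑) :=
      (map_pow Complex.ofRealHom.mapMatrix B k).symm
    rw [hmap, linfty_opNNNorm_map_ofReal, ← NNReal.coe_le_coe]
    push_cast
    exact le_of_mul_le_mul_right hyk hy'
  have hspec := (le_spectralRadius_of_pow_le_nnnorm_pow hpow).trans
    (spectralRadius_map_ofReal_le_specRad B)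
  rw [← ENNReal.ofReal_coe_nnreal, ENNReal.ofReal_le_ofReal_iff'] at hspec
  exact hspec.elim id fun hr => hr.trans (specRad_nonneg B)

theorem one_le_mul_specRad_of_det_eq_zero {n : ℕ} {A Δ M : Matrix (Fin n) (Fin n) ℝ}
    (hA : A.det ≠ 0) (hΔ : ∀ i j, 0 ≤ Δ i j) {δ : ℝ≥0}
    (hM : ∀ i j, |M i j - A i j| ≤ (δ : ℝ) * Δ i j) (hdet : M.det = 0) :
    1 ≤ (δ : ℝ) * specRad ((A⁻¹).map (fun x => |x|) * Δ) := by
  set B := (A⁻¹).map (fun x => |x|) * Δ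
  have hAinv : ∀ i j, 0 ≤ (A⁻¹).map (fun x => |x|) i j := fun i j => abs_nonneg _
  have hB : ∀ i j, 0 ≤ B i j := fun i j => by
    simp only [B, mul_apply]
    exact Finset.sum_nonneg fun k _ => mul_nonneg (hAinv i k) (hΔ k j)
  obtain ⟨x, hx0, hMx⟩ := exists_mulVec_eq_zero_iff.2 hdet
  have hx : x = A⁻¹ *ᵥ ((A - M) *ᵥ x) := by
    rw [sub_mulVec, hMx, sub_zero, mulVec_mulVec, nonsing_inv_mul A (isUnit_iff_ne_zero.2 hA),
      one_mulVec]
  have hxB : |x| ≤ (δ : ℝ) • (B *ᵥ |x|) :=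
    calc |x| = |A⁻¹ *ᵥ ((A - M) *ᵥ x)| := congrArg _ hx
      _ ≤ (A⁻¹).map (fun x => |x|) *ᵥ |(A - M) *ᵥ x| := abs_mulVec_le _ _
      _ ≤ (A⁻¹).map (fun x => |x|) *ᵥ ((A - M).map (fun x => |x|) *ᵥ |x|) :=
          mulVec_mono_of_nonneg hAinv (abs_mulVec_le _ _)
      _ ≤ (A⁻¹).map (fun x => |x|) *ᵥ (((δ : ℝ) • Δ) *ᵥ |x|) :=
          mulVec_mono_of_nonneg hAinv <| mulVec_le_mulVec_of_le
            (fun i j => by simpa [abs_sub_comm] using hM i j) (abs_nonneg x)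
      _ = (δ : ℝ) • (B *ᵥ |x|) := by rw [smul_mulVec, mulVec_smul, mulVec_mulVec]
  obtain rfl | hδ := eq_zero_or_pos δ
  · exact absurd (funext fun i => abs_nonpos_iff.1 (by simpa using hxB i)) hx0
  have hB' : ((δ⁻¹ : ℝ≥0) : ℝ) • |x| ≤ B *ᵥ |x| := by
    rw [NNReal.coe_inv, inv_smul_le_iff_of_pos (by positivity)]
    exact hxB
  have := le_specRad_of_smul_le_mulVec hB (abs_nonneg x) (by simpa using hx0) hB'
  rw [NNReal.coe_inv] at this
  exact (inv_le_iff_one_le_mul₀' (NNReal.coe_pos.2 hδ)).1 this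

theorem regRad_lower_bound {n : ℕ} (A Δ : Matrix (Fin n) (Fin n) ℝ)
    (hA : A.det ≠ 0) (hΔ : ∀ i j, 0 ≤ Δ i j) :
    (∀ δ : ℝ≥0, (δ : ℝ) * specRad ((A⁻¹).map (fun x => |x|) * Δ) < 1 →
      ∀ M : Matrix (Fin n) (Fin n) ℝ,
        (∀ i j, |M i j - A i j| ≤ (δ : ℝ) * Δ i j) → M.det ≠ 0) ∧
    (ENNReal.ofReal (specRad ((A⁻¹).map (fun x => |x|) * Δ)))⁻¹ ≤ regRad A Δ := by
  refine ⟨fun δ hδ M hM hdet =>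
    (hδ.trans_le (one_le_mul_specRad_of_det_eq_zero hA hΔ hM hdet)).false, ?_⟩
  refine le_iInf₂ fun δ ⟨M, hM, hdet⟩ => ?_
  have h1 := one_le_mul_specRad_of_det_eq_zero hA hΔ hM hdet
  have hρ : 0 < specRad ((A⁻¹).map (fun x => |x|) * Δ) :=
    pos_of_mul_pos_right (one_pos.trans_le h1) δ.2
  rw [← ENNReal.ofReal_inv_of_pos hρ, ← ENNReal.ofReal_coe_nnreal]
  exact ENNReal.ofReal_le_ofReal ((inv_le_iff_one_le_mul₀ hρ).2 h1)
end

section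
/- Upper bound on the regularity radius: for a nonsingular n×n real matrix A and Δ ≥ 0, d(A, Δ) ≤ 1 / max_i (|A⁻¹|Δ)_{ii}, provided the maximal diagonal entry of |A⁻¹|Δ is positive. -/
/-!
Pick a row `k` attaining the maximal diagonal entry `s = (|A⁻¹|Δ)ₖₖ` and the vector
`cᵢ = sign((A⁻¹)ₖᵢ) Δᵢₖ`, so that `|cᵢ| ≤ Δᵢₖ` and `(A⁻¹c)ₖ = s`. Subtracting `s⁻¹c` from the
`k`-th column of `A` is a perturbation of size at most `s⁻¹Δ`, and by Cramer's rule it multiplies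
the determinant by `1 - s⁻¹(A⁻¹c)ₖ = 0`.
-/

open Matrix
open scoped ENNReal NNReal

theorem abs_sign_mul_le {α : Type*} [Ring α] [LinearOrder α] [IsStrictOrderedRing α]
    (x : α) {d : α} (hd : 0 ≤ d) : |(SignType.sign x : α) * d| ≤ d := by
  rw [abs_mul, abs_of_nonneg hd]
  rcases SignType.sign x with _ | _ | _ <;> simp [hd]

theorem dotProduct_sign_mul {ι α : Type*} [Fintype ι] [Ring α] [LinearOrder α]
    [IsStrictOrderedRing α] (b d : ι → α) :
    b ⬝ᵥ (fun i => (SignType.sign (b i) : α) * d i) = (fun i => |b i|) ⬝ᵥ d := by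
  simp only [dotProduct, ← mul_assoc, self_mul_sign]

namespace Matrix

variable {ι R : Type*} [Fintype ι] [DecidableEq ι] [CommRing R]

theorem det_updateCol_add_mul (A : Matrix ι ι R) (hA : IsUnit A.det) (k : ι) (r : R)
    (c : ι → R) :
    (A.updateCol k fun i => A i k + r * c i).det = A.det * (1 + r * (A⁻¹ *ᵥ c) k) := by
  have hcol : (fun i => A i k + r * c i) = (fun i => A i k) + r • c := rfl
  rw [hcol, det_updateCol_add, det_updateCol_smul, updateCol_eq_self, ← cramer_apply,
    ← det_smul_inv_mulVec_eq_cramer A c hA, Pi.smul_apply, smul_eq_mul]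
  ring

theorem det_updateCol_sub_inv_mul_eq_zero {K : Type*} [Field K] (A : Matrix ι ι K)
    (hA : A.det ≠ 0) (k : ι) (c : ι → K) (hc : (A⁻¹ *ᵥ c) k ≠ 0) :
    (A.updateCol k fun i => A i k - ((A⁻¹ *ᵥ c) k)⁻¹ * c i).det = 0 := by
  simp_rw [sub_eq_add_neg, ← neg_mul]
  rw [det_updateCol_add_mul A hA.isUnit, neg_mul, inv_mul_cancel₀ hc, add_neg_cancel,
    mul_zero]

end Matrix

theorem regRad_le_ofReal {n : ℕ} {A Δ : Matrix (Fin n) (Fin n) ℝ} {δ : ℝ} (hδ : 0 ≤ δ)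
    (M : Matrix (Fin n) (Fin n) ℝ) (hMA : ∀ i j, |M i j - A i j| ≤ δ * Δ i j)
    (hM : M.det = 0) : regRad A Δ ≤ ENNReal.ofReal δ :=
  iInf₂_le δ.toNNReal ⟨M, by simpa only [Real.coe_toNNReal _ hδ] using hMA, hM⟩

theorem regRad_upper_bound {n : ℕ} (A Δ : Matrix (Fin (n + 1)) (Fin (n + 1)) ℝ)
    (hA : A.det ≠ 0) (hΔ : ∀ i j, 0 ≤ Δ i j)
    (hpos : 0 < Finset.univ.sup' Finset.univ_nonempty
      (fun i => ((A⁻¹).map (fun x => |x|) * Δ) i i)) :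
    regRad A Δ ≤ ENNReal.ofReal
      (1 / Finset.univ.sup' Finset.univ_nonempty
        (fun i => ((A⁻¹).map (fun x => |x|) * Δ) i i)) := by
  obtain ⟨k, -, hk⟩ := Finset.exists_mem_eq_sup' Finset.univ_nonempty
    (fun i => ((A⁻¹).map (fun x => |x|) * Δ) i i)
  set s := Finset.univ.sup' Finset.univ_nonempty
    (fun i => ((A⁻¹).map (fun x => |x|) * Δ) i i)
  set c : Fin (n + 1) → ℝ := fun i => SignType.sign (A⁻¹ k i) * Δ i k
  have hc : (A⁻¹ *ᵥ c) k = s := by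
    rw [hk, mulVec, dotProduct_sign_mul]
    rfl
  refine regRad_le_ofReal (one_div_nonneg.2 hpos.le) _ (fun i j => ?_)
    (det_updateCol_sub_inv_mul_eq_zero A hA k c (hc ▸ hpos.ne'))
  rw [updateCol_apply]
  split_ifs with hj
  · subst hj
    rw [hc, sub_sub_cancel_left, abs_neg, abs_mul, abs_inv, abs_of_pos hpos, one_div]
    exact mul_le_mul_of_nonneg_left (abs_sign_mul_le _ (hΔ i j)) (inv_nonneg.2 hpos.le)
  · rw [sub_self, abs_zero]
    exact mul_nonneg (one_div_nonneg.2 hpos.le) (hΔ i j)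
end

section
/- For the 2×2 identity matrix A = I₂ and the radius matrix Δ with rows (1, 2) and (1, 1), the regularity radius equals √2 − 1; in particular the regularity radius of a matrix with rational entries can be irrational. -/
open Matrix
open scoped ENNReal NNReal

/-!
For `A = 1` and `Δ = !![1, b; c, 1]` with `b, c ≥ 0`, put `s = √(bc)` and `r = 1 / (1 + s)`, so that
`1 - r = s r`. The matrix `!![1 - r, b r; c r, 1 - r]` is singular, since its determinant is
`(1 - r)² - bc r² = 0`. Conversely, for `δ < r` every admissible `M` has diagonal entries at least
`1 - δ > s δ ≥ 0` and off-diagonal product at most `bc δ²`, so `det M ≥ (1 - δ)² - bc δ² > 0`.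
For `b = 2`, `c = 1` this gives `r = 1 / (1 + √2) = √2 - 1`.
-/

section RegRad

variable {n : ℕ} {A Δ : Matrix (Fin n) (Fin n) ℝ}

theorem regRad_le_of_det_eq_zero {δ : ℝ≥0} {M : Matrix (Fin n) (Fin n) ℝ}
    (hM : ∀ i j, |M i j - A i j| ≤ (δ : ℝ) * Δ i j) (hdet : M.det = 0) :
    regRad A Δ ≤ δ :=
  iInf₂_le δ ⟨M, hM, hdet⟩

theorem ofReal_le_regRad {r : ℝ}
    (h : ∀ (δ : ℝ≥0) (M : Matrix (Fin n) (Fin n) ℝ),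
      (∀ i j, |M i j - A i j| ≤ (δ : ℝ) * Δ i j) → M.det = 0 → r ≤ δ) :
    ENNReal.ofReal r ≤ regRad A Δ := by
  refine le_iInf₂ fun δ ⟨M, hM, hdet⟩ => ?_
  rw [← ENNReal.ofReal_coe_nnreal]
  exact ENNReal.ofReal_le_ofReal (h δ M hM hdet)

end RegRad

section FinTwo

variable {b c δ : ℝ}

theorem sq_sub_mul_sq_le_det_of_abs_sub_one_le {M : Matrix (Fin 2) (Fin 2) ℝ} (hδ : δ ≤ 1)
    (hM : ∀ i j, |M i j - (1 : Matrix (Fin 2) (Fin 2) ℝ) i j| ≤ δ * !![1, b; c, 1] i j) :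
    (1 - δ) ^ 2 - b * c * δ ^ 2 ≤ M.det := by
  have h00 := hM 0 0
  have h01 := hM 0 1
  have h10 := hM 1 0
  have h11 := hM 1 1
  simp only [one_apply_eq, ne_eq, zero_ne_one, one_ne_zero, not_false_eq_true, one_apply_ne,
    sub_zero, of_apply, cons_val', cons_val_zero, cons_val_one, empty_val', cons_val_fin_one,
    mul_one] at h00 h01 h10 h11
  have hdiag : (1 - δ) ^ 2 ≤ M 0 0 * M 1 1 := by
    rw [sq]
    exact mul_le_mul (by linarith [neg_abs_le (M 0 0 - 1)]) (by linarith [neg_abs_le (M 1 1 - 1)])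
      (by linarith) (by linarith [neg_abs_le (M 0 0 - 1)])
  have hoff : M 0 1 * M 1 0 ≤ b * c * δ ^ 2 :=
    calc M 0 1 * M 1 0 ≤ |M 0 1| * |M 1 0| := by rw [← abs_mul]; exact le_abs_self _
      _ ≤ (δ * b) * (δ * c) := mul_le_mul h01 h10 (abs_nonneg _) ((abs_nonneg _).trans h01)
      _ = b * c * δ ^ 2 := by ring
  rw [det_fin_two]
  linarith

theorem inv_one_add_sqrt_mul_le_of_det_eq_zero (hbc : 0 ≤ b * c) (hδ : 0 ≤ δ)
    {M : Matrix (Fin 2) (Fin 2) ℝ}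
    (hM : ∀ i j, |M i j - (1 : Matrix (Fin 2) (Fin 2) ℝ) i j| ≤ δ * !![1, b; c, 1] i j)
    (hdet : M.det = 0) :
    (1 + √(b * c))⁻¹ ≤ δ := by
  set s := √(b * c)
  have hs : 0 ≤ s := Real.sqrt_nonneg _
  by_contra! hlt
  have hδ1 : δ < 1 := hlt.trans_le (inv_le_one_of_one_le₀ (by linarith))
  have hsδ : s * δ < 1 - δ := by
    have := mul_lt_mul_of_pos_right hlt (by positivity : (0 : ℝ) < 1 + s)
    rw [inv_mul_cancel₀ (by positivity)] at this
    linarith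
  have hdet_pos : 0 < (1 - δ) ^ 2 - b * c * δ ^ 2 :=
    calc 0 < (1 - δ - s * δ) * (1 - δ + s * δ) :=
          mul_pos (by linarith) (by linarith [mul_nonneg hs hδ])
      _ = (1 - δ) ^ 2 - b * c * δ ^ 2 := by rw [← Real.sq_sqrt hbc]; ring
  linarith [sq_sub_mul_sq_le_det_of_abs_sub_one_le hδ1.le hM]

def extremalMatrix (b c r : ℝ) : Matrix (Fin 2) (Fin 2) ℝ :=
  !![1 - r, b * r; c * r, 1 - r]

theorem abs_extremalMatrix_sub_one_le {r : ℝ} (hb : 0 ≤ b) (hc : 0 ≤ c) (hr : 0 ≤ r)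
    (i j : Fin 2) :
    |extremalMatrix b c r i j - (1 : Matrix (Fin 2) (Fin 2) ℝ) i j| ≤ r * !![1, b; c, 1] i j := by
  fin_cases i <;> fin_cases j <;>
    simp [extremalMatrix, abs_of_nonneg hr, abs_of_nonneg hb, abs_of_nonneg hc, mul_comm]

theorem det_extremalMatrix_eq_zero {r : ℝ} (hbc : 0 ≤ b * c) (hr : (1 + √(b * c)) * r = 1) :
    (extremalMatrix b c r).det = 0 := by
  rw [extremalMatrix, det_fin_two_of, show 1 - r = √(b * c) * r by linarith]
  linear_combination r ^ 2 * Real.mul_self_sqrt hbc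

theorem regRad_one_fin_two (hb : 0 ≤ b) (hc : 0 ≤ c) :
    regRad (1 : Matrix (Fin 2) (Fin 2) ℝ) !![1, b; c, 1] = ENNReal.ofReal (1 + √(b * c))⁻¹ := by
  have hbc := mul_nonneg hb hc
  set r := (1 + √(b * c))⁻¹
  have hr : 0 ≤ r := by positivity
  apply le_antisymm
  · refine regRad_le_of_det_eq_zero (δ := r.toNNReal) (M := extremalMatrix b c r) ?_
      (det_extremalMatrix_eq_zero hbc (mul_inv_cancel₀ (by positivity)))
    rw [Real.coe_toNNReal r hr]
    exact abs_extremalMatrix_sub_one_le hb hc hr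
  · exact ofReal_le_regRad fun δ _ hM hdet =>
      inv_one_add_sqrt_mul_le_of_det_eq_zero hbc δ.coe_nonneg hM hdet

end FinTwo

theorem regRad_example_irrational :
    regRad (1 : Matrix (Fin 2) (Fin 2) ℝ) !![1, 2; 1, 1]
      = ENNReal.ofReal (Real.sqrt 2 - 1) ∧ Irrational (Real.sqrt 2 - 1) := by
  have hinv : (1 + √2)⁻¹ = √2 - 1 := by
    refine inv_eq_of_mul_eq_one_right ?_
    linear_combination Real.mul_self_sqrt zero_le_two
  refine ⟨?_, by simpa using irrational_sqrt_two.sub_natCast 1⟩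
  rw [regRad_one_fin_two zero_le_two zero_le_one, mul_one, hinv]
end

section
/- There exists a 3×3 matrix A and a nonzero nonnegative 3×3 matrix Δ such that d(A, Δ) = ∞. Specifically, for A with rows (1,1,1), (1,1,2), (1,2,3) and Δ the matrix with a single 1 in position (3,3) and zeros elsewhere, every matrix M with |M − A| ≤ δΔ has determinant −1 and is therefore nonsingular for every δ ≥ 0. -/
open Matrix
open scoped ENNReal NNReal

/-! Only the entry `(2, 2)` of `A` may be perturbed, and the determinant is affine in that entry
with slope the cofactor `adjugate A 2 2 = det !![1, 1; 1, 1] = 0`. Hence every admissible `M`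
has `det M = det A = -1`, the set of singular perturbations is empty, and its infimum is `⊤`. -/

namespace Matrix

variable {n : Type*} [Fintype n] [DecidableEq n] {R : Type*} [CommRing R]

theorem det_updateRow_add_smul_single (A : Matrix n n R) (i j : n) (c : R) :
    (A.updateRow i (A i + c • Pi.single j 1)).det = A.det + c * A.adjugate j i := by
  rw [det_updateRow_add, updateRow_eq_self, det_updateRow_smul, adjugate_apply]

theorem det_eq_add_mul_adjugate_of_eq_off {A M : Matrix n n R} {i j : n}
    (h : ∀ k l, (k, l) ≠ (i, j) → M k l = A k l) :
    M.det = A.det + (M i j - A i j) * A.adjugate j i := by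
  rw [← det_updateRow_add_smul_single]
  congr
  ext k l
  rcases eq_or_ne k i with rfl | hk
  · rcases eq_or_ne l j with rfl | hl
    · simp
    · simp [hl, h k l (by simp [hl])]
  · simp [hk, h k l (by simp [hk])]

end Matrix

theorem apply_eq_of_abs_sub_le_mul_of_eq_zero {ι κ : Type*} {A M Δ : Matrix ι κ ℝ} {δ : ℝ}
    (h : ∀ i j, |M i j - A i j| ≤ δ * Δ i j) {i : ι} {j : κ} (hΔ : Δ i j = 0) :
    M i j = A i j := by
  simpa [hΔ, sub_eq_zero] using h i j

theorem regRad_eq_top_of_forall_det_ne_zero {n : ℕ} {A Δ : Matrix (Fin n) (Fin n) ℝ}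
    (h : ∀ δ : ℝ, 0 ≤ δ → ∀ M : Matrix (Fin n) (Fin n) ℝ,
      (∀ i j, |M i j - A i j| ≤ δ * Δ i j) → M.det ≠ 0) :
    regRad A Δ = ⊤ := by
  simp only [regRad, iInf_eq_top, Set.mem_ofPred_eq]
  rintro δ ⟨M, hM, hdet⟩
  exact absurd hdet (h δ δ.coe_nonneg M hM)

theorem regRad_infinite_example :
    (∀ δ : ℝ, 0 ≤ δ → ∀ M : Matrix (Fin 3) (Fin 3) ℝ,
      (∀ i j, |M i j - (!![1, 1, 1; 1, 1, 2; 1, 2, 3] : Matrix (Fin 3) (Fin 3) ℝ) i j|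
        ≤ δ * (!![0, 0, 0; 0, 0, 0; 0, 0, 1] : Matrix (Fin 3) (Fin 3) ℝ) i j) →
      M.det = -1) ∧
    regRad (!![1, 1, 1; 1, 1, 2; 1, 2, 3] : Matrix (Fin 3) (Fin 3) ℝ)
      !![0, 0, 0; 0, 0, 0; 0, 0, 1] = ⊤ := by
  set A : Matrix (Fin 3) (Fin 3) ℝ := !![1, 1, 1; 1, 1, 2; 1, 2, 3]
  set Δ : Matrix (Fin 3) (Fin 3) ℝ := !![0, 0, 0; 0, 0, 0; 0, 0, 1]
  have hΔ : ∀ k l, (k, l) ≠ (2, 2) → Δ k l = 0 := by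
    intro k l hkl
    fin_cases k <;> fin_cases l <;> simp_all [Δ]
  have hdetA : A.det = -1 := by
    simp [A, det_fin_three]
    norm_num
  have hadjA : A.adjugate 2 2 = 0 := by
    simp [A, adjugate_fin_three]
  have hdet : ∀ δ : ℝ, 0 ≤ δ → ∀ M : Matrix (Fin 3) (Fin 3) ℝ,
      (∀ i j, |M i j - A i j| ≤ δ * Δ i j) → M.det = -1 := by
    intro δ _ M hM
    rw [det_eq_add_mul_adjugate_of_eq_off (i := 2) (j := 2)
      (fun k l hkl ↦ apply_eq_of_abs_sub_le_mul_of_eq_zero hM (hΔ k l hkl)), hdetA, hadjA,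
      mul_zero, add_zero]
  exact ⟨hdet, regRad_eq_top_of_forall_det_ne_zero fun δ hδ M hM ↦ by norm_num [hdet δ hδ M hM]⟩
end

section
/- The interval matrix [A − Δ, A + Δ] (with A nonsingular) is regular if and only if the system |Ax| ≤ Δ|x| (entrywise absolute values) has only the trivial solution x = 0. -/
/-!
If `M` lies in `[A - Δ, A + Δ]` and `M x = 0`, then `A x = (A - M) x`, and the triangle
inequality gives `|A x| ≤ Δ |x|`. Conversely, given such an `x ≠ 0`, put `d = Δ |x|` and
`c i = (A x) i / d i ∈ [-1, 1]`; the matrix `M = A - diag(c) Δ diag(sign x)` lies in the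
interval and `M x = A x - c d = 0`, so `M` is singular (Oettli–Prager).
-/

open Matrix

variable {ι R : Type*} [Fintype ι]

section OrderedRing

variable [CommRing R] [LinearOrder R] [IsStrictOrderedRing R]

theorem abs_mulVec_le_of_mulVec_eq_zero {A M Δ : Matrix ι ι R}
    (hM : ∀ i j, |M i j - A i j| ≤ Δ i j) {x : ι → R} (hMx : M *ᵥ x = 0) (i : ι) :
    |(A *ᵥ x) i| ≤ (Δ *ᵥ fun j => |x j|) i := by
  have hAx : A *ᵥ x = (A - M) *ᵥ x := by rw [sub_mulVec, hMx, sub_zero]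
  calc |(A *ᵥ x) i| = |∑ j, (A i j - M i j) * x j| := by rw [hAx]; rfl
    _ ≤ ∑ j, |(A i j - M i j) * x j| := Finset.abs_sum_le_sum_abs _ _
    _ ≤ ∑ j, Δ i j * |x j| := by
      gcongr with j
      rw [abs_mul, abs_sub_comm]
      exact mul_le_mul_of_nonneg_right (hM i j) (abs_nonneg _)
    _ = (Δ *ᵥ fun j => |x j|) i := rfl

end OrderedRing

section OrderedField

variable [Field R] [LinearOrder R] [IsStrictOrderedRing R]

theorem exists_mulVec_eq_zero_of_abs_mulVec_le [DecidableEq ι] {A Δ : Matrix ι ι R}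
    (hΔ : ∀ i j, 0 ≤ Δ i j) {x : ι → R} (hx : ∀ i, |(A *ᵥ x) i| ≤ (Δ *ᵥ fun j => |x j|) i) :
    ∃ M : Matrix ι ι R, (∀ i j, |M i j - A i j| ≤ Δ i j) ∧ M *ᵥ x = 0 := by
  set d : ι → R := Δ *ᵥ fun j => |x j|
  -- where `d i = 0` the junk value `c i = 0` is harmless, since then `(A *ᵥ x) i = 0` too
  set c : ι → R := fun i => (A *ᵥ x) i / d i
  set s : ι → R := fun j => SignType.sign (x j)
  have hc : ∀ i, |c i| ≤ 1 := fun i => by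
    rw [abs_div]
    exact div_le_one_of_le₀ ((hx i).trans (le_abs_self _)) (abs_nonneg _)
  have hcd : ∀ i, c i * d i = (A *ᵥ x) i := fun i =>
    div_mul_cancel_of_imp fun hd => abs_nonpos_iff.mp (hd ▸ hx i)
  refine ⟨A - diagonal c * Δ * diagonal s, fun i j => ?_, ?_⟩
  · have hs : |s j| ≤ 1 := by
      rcases lt_trichotomy (x j) 0 with h | h | h <;> simp [s, h]
    simp only [Matrix.sub_apply, sub_sub_cancel_left, abs_neg, mul_diagonal, diagonal_mul,
      abs_mul, abs_of_nonneg (hΔ i j)]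
    exact (mul_le_of_le_one_right (mul_nonneg (abs_nonneg _) (hΔ i j)) hs).trans
      (mul_le_of_le_one_left (hΔ i j) (hc i))
  · have hsx : s * x = fun j => |x j| := funext fun j => sign_mul_self (x j)
    have hdiag (v w : ι → R) : diagonal v *ᵥ w = v * w := funext (mulVec_diagonal v w)
    ext i
    rw [sub_mulVec, ← mulVec_mulVec, ← mulVec_mulVec, hdiag s, hsx, hdiag c, Pi.sub_apply,
      Pi.mul_apply, hcd, sub_self, Pi.zero_apply]

theorem exists_det_eq_zero_iff_exists_abs_mulVec_le [DecidableEq ι] {A Δ : Matrix ι ι R}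
    (hΔ : ∀ i j, 0 ≤ Δ i j) :
    (∃ M : Matrix ι ι R, (∀ i j, |M i j - A i j| ≤ Δ i j) ∧ M.det = 0) ↔
      ∃ x ≠ 0, ∀ i, |(A *ᵥ x) i| ≤ (Δ *ᵥ fun j => |x j|) i := by
  constructor
  · rintro ⟨M, hM, hdet⟩
    obtain ⟨x, hx0, hMx⟩ := exists_mulVec_eq_zero_iff.mpr hdet
    exact ⟨x, hx0, abs_mulVec_le_of_mulVec_eq_zero hM hMx⟩
  · rintro ⟨x, hx0, hx⟩
    obtain ⟨M, hM, hMx⟩ := exists_mulVec_eq_zero_of_abs_mulVec_le hΔ hx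
    exact ⟨M, hM, exists_mulVec_eq_zero_iff.mp ⟨x, hx0, hMx⟩⟩

end OrderedField

theorem regular_iff_trivial_solution_general {n : ℕ} (A Δ : Matrix (Fin n) (Fin n) ℝ)
    (hΔ : ∀ i j, 0 ≤ Δ i j) :
    (∀ M : Matrix (Fin n) (Fin n) ℝ, (∀ i j, |M i j - A i j| ≤ Δ i j) → M.det ≠ 0) ↔
    (∀ x : Fin n → ℝ,
      (∀ i, |A.mulVec x i| ≤ Δ.mulVec (fun j => |x j|) i) → x = 0) := by
  simpa only [not_exists, not_and, ne_eq, not_imp_not] using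
    not_congr (exists_det_eq_zero_iff_exists_abs_mulVec_le (A := A) hΔ)

theorem regular_iff_trivial_solution {n : ℕ} (A Δ : Matrix (Fin n) (Fin n) ℝ)
    (hA : A.det ≠ 0) (hΔ : ∀ i j, 0 ≤ Δ i j) :
    (∀ M : Matrix (Fin n) (Fin n) ℝ, (∀ i j, |M i j - A i j| ≤ Δ i j) → M.det ≠ 0) ↔
    (∀ x : Fin n → ℝ,
      (∀ i, |A.mulVec x i| ≤ Δ.mulVec (fun j => |x j|) i) → x = 0) :=
  regular_iff_trivial_solution_general A Δ hΔ
end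

section
/- If Δ ≥ 0 is a nonnegative n×n matrix such that d(A, Δ) = ∞ for some nonsingular matrix A, then Δ has at most n(n−1)/2 nonzero entries; combined with the triangular example, n(n−1)/2 is the maximal number of nonzero entries of Δ compatible with an infinite regularity radius. -/
/-!
Let `S` be the support of `Δ`. If `d(A, Δ) = ∞`, every matrix that agrees with `A` outside `S`
is nonsingular, since its deviation from `A` is bounded by `δΔ` for a large `δ`. Changing one
entry `(i, j) ∈ S` of `A` by `s` multiplies the determinant by `1 + s (A⁻¹)ⱼᵢ`, so `(A⁻¹)ⱼᵢ = 0`;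
changing two entries `(i, j), (k, l) ∈ S` then forces `(A⁻¹)ⱼₖ (A⁻¹)ₗᵢ = 0`. As `A⁻¹` is
nonsingular, some permutation `σ` has `(A⁻¹)_{σ m, m} ≠ 0` for all `m`, and these two facts say
exactly that `(i, j) ↦ {σ i, j}` maps `S` injectively into the off-diagonal unordered pairs, of
which there are `n(n-1)/2`.
-/

open Matrix
open scoped ENNReal NNReal

namespace Matrix

variable {ι : Type*} [Fintype ι] [DecidableEq ι]

theorem det_add_single_add_single {R : Type*} [CommRing R] {A : Matrix ι ι R} (hA : IsUnit A.det)
    (i j k l : ι) (s t : R) :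
    (A + single i j s + single k l t).det =
      A.det * ((1 + s * A⁻¹ j i) * (1 + t * A⁻¹ l k) - s * t * (A⁻¹ j k * A⁻¹ l i)) := by
  have hUV : single i j s + single k l t =
      (of ![Pi.single i s, Pi.single k t])ᵀ * of ![Pi.single j (1 : R), Pi.single l 1] := by
    ext a b
    simp [mul_apply, Fin.sum_univ_two, single_apply, Pi.single_apply, eq_comm, ← ite_and,
      and_comm]
  rw [add_assoc, hUV, det_add_mul _ _ hA, det_fin_two]
  congr 1
  simp [vecMul, dotProduct, Pi.single_apply]
  ring

theorem exists_perm_forall_apply_ne_zero {R : Type*} [CommRing R] {B : Matrix ι ι R}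
    (hB : B.det ≠ 0) : ∃ σ : Equiv.Perm ι, ∀ m, B (σ m) m ≠ 0 := by
  contrapose! hB
  rw [det_apply]
  exact Finset.sum_eq_zero fun σ _ ↦ by
    obtain ⟨m, hm⟩ := hB σ
    rw [Finset.prod_eq_zero (f := fun i ↦ B (σ i) i) (Finset.mem_univ m) hm, smul_zero]

variable {K : Type*} [Field K]

def RobustlyNonsingularOn (A : Matrix ι ι K) (S : Set (ι × ι)) : Prop :=
  ∀ M : Matrix ι ι K, (∀ p ∉ S, M p.1 p.2 = A p.1 p.2) → M.det ≠ 0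

namespace RobustlyNonsingularOn

variable {A : Matrix ι ι K} {S : Set (ι × ι)}

theorem det_ne_zero (hA : A.RobustlyNonsingularOn S) : A.det ≠ 0 :=
  hA A fun _ _ ↦ rfl

theorem det_add_single_add_single_ne_zero (hA : A.RobustlyNonsingularOn S) {i j k l : ι}
    (hij : (i, j) ∈ S) (hkl : (k, l) ∈ S) (s t : K) :
    (A + single i j s + single k l t).det ≠ 0 := by
  refine hA _ fun ⟨a, b⟩ hab ↦ ?_
  have hij' : ¬(i = a ∧ j = b) := fun ⟨hia, hjb⟩ ↦ hab (hia ▸ hjb ▸ hij)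
  have hkl' : ¬(k = a ∧ l = b) := fun ⟨hka, hlb⟩ ↦ hab (hka ▸ hlb ▸ hkl)
  simp only [add_apply, single_apply, if_neg hij', if_neg hkl', add_zero]

theorem inv_apply_eq_zero (hA : A.RobustlyNonsingularOn S) {i j : ι} (hij : (i, j) ∈ S) :
    A⁻¹ j i = 0 := by
  by_contra hne
  apply hA.det_add_single_add_single_ne_zero hij hij (-(A⁻¹ j i)⁻¹) 0
  rw [det_add_single_add_single hA.det_ne_zero.isUnit, neg_mul, inv_mul_cancel₀ hne]
  ring

theorem inv_apply_mul_inv_apply_eq_zero (hA : A.RobustlyNonsingularOn S) {i j k l : ι}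
    (hij : (i, j) ∈ S) (hkl : (k, l) ∈ S) : A⁻¹ j k * A⁻¹ l i = 0 := by
  by_contra hne
  apply hA.det_add_single_add_single_ne_zero hij hkl 1 (A⁻¹ j k * A⁻¹ l i)⁻¹
  rw [det_add_single_add_single hA.det_ne_zero.isUnit, hA.inv_apply_eq_zero hij,
    hA.inv_apply_eq_zero hkl]
  simp only [mul_zero, add_zero, one_mul, inv_mul_cancel₀ hne, sub_self]

theorem ncard_le (hA : A.RobustlyNonsingularOn S) : S.ncard ≤ (Fintype.card ι).choose 2 := by
  have hdet : A⁻¹.det ≠ 0 := by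
    rw [det_nonsing_inv, Ring.inverse_eq_inv]
    exact inv_ne_zero hA.det_ne_zero
  obtain ⟨σ, hσ⟩ := exists_perm_forall_apply_ne_zero hdet
  let f : ι × ι → Sym2 ι := fun p ↦ s(σ p.1, p.2)
  have hf_offDiag : ∀ p ∈ S, f p ∈ Sym2.diagSetᶜ := by
    rintro ⟨i, j⟩ hij (hdiag : σ i = j)
    exact hσ i (hdiag ▸ hA.inv_apply_eq_zero hij)
  have hf_inj : S.InjOn f := by
    rintro ⟨i, j⟩ hij ⟨k, l⟩ hkl (hfeq : s(σ i, j) = s(σ k, l))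
    rcases Sym2.eq_iff.mp hfeq with ⟨hik, hjl⟩ | ⟨hil, hjk⟩
    · exact Prod.ext (σ.injective hik) hjl
    · refine absurd (hA.inv_apply_mul_inv_apply_eq_zero hij hkl) (mul_ne_zero ?_ ?_)
      · exact hjk ▸ hσ k
      · exact hil ▸ hσ i
  calc S.ncard = (f '' S).ncard := hf_inj.ncard_image.symm
    _ ≤ (Sym2.diagSetᶜ : Set (Sym2 ι)).ncard :=
      Set.ncard_le_ncard (Set.image_subset_iff.mpr hf_offDiag)
    _ = (Fintype.card ι).choose 2 := by rw [Sym2.ncard_diagSet_compl, Nat.card_eq_fintype_card]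

end RobustlyNonsingularOn

end Matrix

theorem det_ne_zero_of_regRad_eq_top {n : ℕ} {A Δ M : Matrix (Fin n) (Fin n) ℝ}
    (hinf : regRad A Δ = ⊤) {δ : ℝ≥0} (hM : ∀ i j, |M i j - A i j| ≤ δ * Δ i j) : M.det ≠ 0 := by
  intro hdet
  have hle : regRad A Δ ≤ δ := iInf₂_le δ ⟨M, hM, hdet⟩
  exact ENNReal.coe_ne_top (top_le_iff.mp (hinf ▸ hle))

theorem robustlyNonsingularOn_of_regRad_eq_top {n : ℕ} {A Δ : Matrix (Fin n) (Fin n) ℝ}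
    (hΔ : ∀ i j, 0 ≤ Δ i j) (hinf : regRad A Δ = ⊤) :
    A.RobustlyNonsingularOn {p | Δ p.1 p.2 ≠ 0} := by
  intro M hM
  obtain ⟨C, hC⟩ := (Set.finite_range fun p : Fin n × Fin n ↦
    |M p.1 p.2 - A p.1 p.2| / Δ p.1 p.2).bddAbove
  refine det_ne_zero_of_regRad_eq_top hinf (δ := C.toNNReal) fun i j ↦ ?_
  rcases (hΔ i j).eq_or_lt with hzero | hpos
  · rw [hM (i, j) (not_not.mpr hzero.symm), ← hzero, sub_self, abs_zero, mul_zero]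
  · rw [← div_le_iff₀ hpos]
    exact (hC ⟨(i, j), rfl⟩).trans (Real.le_coe_toNNReal C)

theorem nonzero_entries_le_of_regRad_infinite_general {n : ℕ} (A Δ : Matrix (Fin n) (Fin n) ℝ)
    (hΔ : ∀ i j, 0 ≤ Δ i j) (hinf : regRad A Δ = ⊤) :
    {p : Fin n × Fin n | Δ p.1 p.2 ≠ 0}.ncard ≤ n * (n - 1) / 2 := by
  simpa [Nat.choose_two_right] using (robustlyNonsingularOn_of_regRad_eq_top hΔ hinf).ncard_le

theorem nonzero_entries_le_of_regRad_infinite {n : ℕ} (A Δ : Matrix (Fin n) (Fin n) ℝ)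
    (hA : A.det ≠ 0) (hΔ : ∀ i j, 0 ≤ Δ i j) (hinf : regRad A Δ = ⊤) :
    {p : Fin n × Fin n | Δ p.1 p.2 ≠ 0}.ncard ≤ n * (n - 1) / 2 :=
  nonzero_entries_le_of_regRad_infinite_general A Δ hΔ hinf
end

section
/- Rank-one reduction of the regularity radius: if Δ = uvᵀ with u, v ∈ ℝⁿ having all entries positive, then d(A, uvᵀ) = d(D_u⁻¹ A D_v⁻¹, eeᵀ), where D_u and D_v are the diagonal matrices with diagonals u and v. -/
open Matrix
open scoped ENNReal NNReal

/-!
For `u, v ≥ 0`, `M ↦ D_u M D_v` maps `[A - δΔ, A + δΔ]` into `[D_u A D_v - δ D_u Δ D_v,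
D_u A D_v + δ D_u Δ D_v]` (entrywise `|u i (M - A) i j v j| = u i v j |(M - A) i j|`) and
preserves singularity; for `u, v > 0` the scaling by `u⁻¹, v⁻¹` goes back, so
`regRad (D_u A D_v) (D_u Δ D_v) = regRad A Δ`. Apply this to `D_u⁻¹ A D_v⁻¹` and `eeᵀ`,
using `D_u eeᵀ D_v = uvᵀ`.
-/

namespace Matrix

section Diagonal

variable {ι R K : Type*} [Fintype ι] [DecidableEq ι]

theorem diagonal_mul_mul_diagonal_apply [NonUnitalNonAssocSemiring R] (u v : ι → R)
    (M : Matrix ι ι R) (i j : ι) : (diagonal u * M * diagonal v) i j = u i * M i j * v j := by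
  simp only [mul_diagonal, diagonal_mul]

theorem diagonal_mul_of_one_mul_diagonal [NonAssocSemiring R] (u v : ι → R) :
    diagonal u * of (fun _ _ => (1 : R)) * diagonal v = vecMulVec u v := by
  ext i j
  rw [diagonal_mul_mul_diagonal_apply, of_apply, mul_one, vecMulVec_apply]

variable [Field K]

theorem inv_diagonal_of_ne_zero {u : ι → K} (hu : ∀ i, u i ≠ 0) :
    (diagonal u)⁻¹ = diagonal u⁻¹ :=
  inv_eq_right_inv (by simp [diagonal_mul_diagonal, hu, ← diagonal_one])

theorem diagonal_inv_mul_mul_diagonal_inv_cancel {u v : ι → K} (hu : ∀ i, u i ≠ 0)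
    (hv : ∀ i, v i ≠ 0) (A : Matrix ι ι K) :
    diagonal u⁻¹ * (diagonal u * A * diagonal v) * diagonal v⁻¹ = A := by
  ext i j
  simp only [diagonal_mul_mul_diagonal_apply, Pi.inv_apply]
  field_simp [hu i, hv j]

end Diagonal

end Matrix

section RegRad

variable {n : ℕ}

def HasSingularWithin (A Δ : Matrix (Fin n) (Fin n) ℝ) (δ : ℝ≥0) : Prop :=
  ∃ M : Matrix (Fin n) (Fin n) ℝ, (∀ i j, |M i j - A i j| ≤ (δ : ℝ) * Δ i j) ∧ M.det = 0

theorem regRad_eq_iInf_hasSingularWithin (A Δ : Matrix (Fin n) (Fin n) ℝ) :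
    regRad A Δ = ⨅ δ ∈ {δ | HasSingularWithin A Δ δ}, (δ : ℝ≥0∞) :=
  rfl

theorem HasSingularWithin.diagonal_mul_mul_diagonal {A Δ : Matrix (Fin n) (Fin n) ℝ}
    {δ : ℝ≥0} {u v : Fin n → ℝ} (hu : ∀ i, 0 ≤ u i) (hv : ∀ i, 0 ≤ v i)
    (h : HasSingularWithin A Δ δ) :
    HasSingularWithin (diagonal u * A * diagonal v) (diagonal u * Δ * diagonal v) δ := by
  obtain ⟨M, hMA, hdet⟩ := h
  refine ⟨diagonal u * M * diagonal v, fun i j => ?_, by simp [det_mul, hdet]⟩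
  simp only [diagonal_mul_mul_diagonal_apply]
  have huv : 0 ≤ u i * v j := mul_nonneg (hu i) (hv j)
  calc |u i * M i j * v j - u i * A i j * v j| = u i * v j * |M i j - A i j| := by
        rw [← abs_of_nonneg huv, ← abs_mul]; ring_nf
    _ ≤ u i * v j * ((δ : ℝ) * Δ i j) := mul_le_mul_of_nonneg_left (hMA i j) huv
    _ = (δ : ℝ) * (u i * Δ i j * v j) := by ring

theorem hasSingularWithin_diagonal_mul_mul_diagonal_iff {A Δ : Matrix (Fin n) (Fin n) ℝ}
    {δ : ℝ≥0} {u v : Fin n → ℝ} (hu : ∀ i, 0 < u i) (hv : ∀ i, 0 < v i) :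
    HasSingularWithin (diagonal u * A * diagonal v) (diagonal u * Δ * diagonal v) δ ↔
      HasSingularWithin A Δ δ := by
  refine ⟨fun h => ?_, .diagonal_mul_mul_diagonal (fun i => (hu i).le) fun i => (hv i).le⟩
  have h' := h.diagonal_mul_mul_diagonal (u := u⁻¹) (v := v⁻¹)
    (fun i => (inv_pos.2 (hu i)).le) (fun i => (inv_pos.2 (hv i)).le)
  rwa [diagonal_inv_mul_mul_diagonal_inv_cancel (fun i => (hu i).ne') (fun i => (hv i).ne'),
    diagonal_inv_mul_mul_diagonal_inv_cancel (fun i => (hu i).ne') (fun i => (hv i).ne')] at h'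

theorem regRad_diagonal_mul_mul_diagonal (A Δ : Matrix (Fin n) (Fin n) ℝ) {u v : Fin n → ℝ}
    (hu : ∀ i, 0 < u i) (hv : ∀ i, 0 < v i) :
    regRad (diagonal u * A * diagonal v) (diagonal u * Δ * diagonal v) = regRad A Δ := by
  simp only [regRad_eq_iInf_hasSingularWithin,
    hasSingularWithin_diagonal_mul_mul_diagonal_iff hu hv]

end RegRad

theorem regRad_rank_one_reduction {n : ℕ} (A : Matrix (Fin n) (Fin n) ℝ)
    (u v : Fin n → ℝ) (hu : ∀ i, 0 < u i) (hv : ∀ i, 0 < v i) :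
    regRad A (Matrix.vecMulVec u v)
      = regRad ((Matrix.diagonal u)⁻¹ * A * (Matrix.diagonal v)⁻¹)
        (Matrix.of fun _ _ => (1 : ℝ)) := by
  have hu₀ : ∀ i, u i ≠ 0 := fun i => (hu i).ne'
  have hv₀ : ∀ i, v i ≠ 0 := fun i => (hv i).ne'
  have hA : diagonal u * (diagonal u⁻¹ * A * diagonal v⁻¹) * diagonal v = A := by
    simpa only [inv_inv] using diagonal_inv_mul_mul_diagonal_inv_cancel (u := u⁻¹) (v := v⁻¹)
      (fun i => inv_ne_zero (hu₀ i)) (fun i => inv_ne_zero (hv₀ i)) A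
  rw [inv_diagonal_of_ne_zero hu₀, inv_diagonal_of_ne_zero hv₀,
    ← regRad_diagonal_mul_mul_diagonal _ (of fun _ _ => 1) hu hv, hA,
    diagonal_mul_of_one_mul_diagonal]
end

section
/- For the all-ones radius matrix Δ = eeᵀ and nonsingular A, a nearest singular matrix to A in the maximum norm has the form A − d(A)·yzᵀ for some sign vectors y, z ∈ {±1}ⁿ; that is, there exist y, z ∈ {±1}ⁿ such that A − d(A)·yzᵀ is singular, where d(A) = d(A, eeᵀ). -/
/-!
If `M` is singular with `|M - A| ≤ δ` entrywise and `x ≠ 0` lies in its kernel, then with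
`z = sign x`, `p = zᵀ A⁻¹` and `y = sign p` one gets `‖x‖₁ = pᵀ A x ≤ ‖p‖₁ δ ‖x‖₁`, i.e.
`1 ≤ δ · zᵀ A⁻¹ y`. Conversely, whenever `q = zᵀ A⁻¹ y ≠ 0`, the matrix `A - q⁻¹ y zᵀ` kills `A⁻¹ y`.
Hence `d(A) = 1 / max_{y,z} zᵀ A⁻¹ y`, and a maximising pair of sign vectors gives a nearest
singular matrix of the required form.
-/

open Matrix
open scoped ENNReal NNReal

section SignVector

variable {ι : Type*}

def IsSignVector (y : ι → ℝ) : Prop := ∀ i, y i = 1 ∨ y i = -1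

noncomputable def signVec (x : ι → ℝ) : ι → ℝ := fun i => if 0 ≤ x i then 1 else -1

theorem isSignVector_signVec (x : ι → ℝ) : IsSignVector (signVec x) := fun i => by
  unfold signVec; split_ifs <;> simp

theorem IsSignVector.abs_eq_one {y : ι → ℝ} (hy : IsSignVector y) (i : ι) : |y i| = 1 := by
  rcases hy i with h | h <;> simp [h]

theorem finite_setOf_isSignVector [Finite ι] : {y : ι → ℝ | IsSignVector y}.Finite :=
  (Set.Finite.pi (t := fun _ => ({1, -1} : Set ℝ)) fun _ => Set.toFinite _).subset
    fun _ hy i _ => hy i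

theorem abs_vecMulVec_apply {y z : ι → ℝ} (hy : IsSignVector y) (hz : IsSignVector z)
    (i j : ι) : |vecMulVec y z i j| = 1 := by
  rw [vecMulVec_apply, abs_mul, hy.abs_eq_one, hz.abs_eq_one, mul_one]

variable [Fintype ι]

theorem signVec_dotProduct (x : ι → ℝ) : signVec x ⬝ᵥ x = ∑ i, |x i| := by
  refine Finset.sum_congr rfl fun i _ => ?_
  unfold signVec
  split_ifs with h
  · rw [one_mul, abs_of_nonneg h]
  · rw [neg_one_mul, abs_of_neg (not_le.mp h)]

theorem dotProduct_signVec (x : ι → ℝ) : x ⬝ᵥ signVec x = ∑ i, |x i| := by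
  rw [dotProduct_comm, signVec_dotProduct]

end SignVector

section Perturbation

variable {ι : Type*} [Fintype ι]

theorem abs_mulVec_apply_le_of_mulVec_eq_zero {A M : Matrix ι ι ℝ} {δ : ℝ}
    (hMA : ∀ i j, |M i j - A i j| ≤ δ) {x : ι → ℝ} (hx : M *ᵥ x = 0) (i : ι) :
    |(A *ᵥ x) i| ≤ δ * ∑ j, |x j| := by
  have hAx : A *ᵥ x = (A - M) *ᵥ x := by rw [sub_mulVec, hx, sub_zero]
  calc |(A *ᵥ x) i| = |∑ j, (A i j - M i j) * x j| := by rw [hAx]; rfl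
    _ ≤ ∑ j, |(A i j - M i j) * x j| := Finset.abs_sum_le_sum_abs _ _
    _ ≤ ∑ j, δ * |x j| := Finset.sum_le_sum fun j _ => by
        rw [abs_mul, abs_sub_comm]
        exact mul_le_mul_of_nonneg_right (hMA i j) (abs_nonneg _)
    _ = δ * ∑ j, |x j| := (Finset.mul_sum _ _ _).symm

theorem exists_isSignVector_one_le_mul_dotProduct [DecidableEq ι] {A M : Matrix ι ι ℝ} (hA : IsUnit A.det)
    (hM : M.det = 0) {δ : ℝ} (hMA : ∀ i j, |M i j - A i j| ≤ δ) :
    ∃ y z, IsSignVector y ∧ IsSignVector z ∧ 1 ≤ δ * (z ⬝ᵥ A⁻¹ *ᵥ y) := by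
  obtain ⟨x, hx0, hx⟩ := exists_mulVec_eq_zero_iff.mpr hM
  set p := signVec x ᵥ* A⁻¹
  refine ⟨signVec p, signVec x, isSignVector_signVec p, isSignVector_signVec x, ?_⟩
  have hs : 0 < ∑ j, |x j| := by
    obtain ⟨j, hj⟩ := Function.ne_iff.mp hx0
    exact Finset.sum_pos' (fun j _ => abs_nonneg _) ⟨j, Finset.mem_univ _, abs_pos.mpr hj⟩
  have hq : signVec x ⬝ᵥ A⁻¹ *ᵥ signVec p = ∑ i, |p i| := by
    rw [dotProduct_mulVec, dotProduct_signVec]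
  have hpAx : p ⬝ᵥ A *ᵥ x = ∑ j, |x j| := by
    rw [dotProduct_mulVec, vecMul_vecMul, nonsing_inv_mul A hA, vecMul_one, signVec_dotProduct]
  have key : 1 * ∑ j, |x j| ≤ δ * (∑ i, |p i|) * ∑ j, |x j| :=
    calc 1 * ∑ j, |x j| = ∑ i, p i * (A *ᵥ x) i := by rw [one_mul, ← hpAx]; rfl
      _ ≤ ∑ i, |p i| * (δ * ∑ j, |x j|) := Finset.sum_le_sum fun i _ =>
          (le_abs_self _).trans <| (abs_mul _ _).trans_le <|
            mul_le_mul_of_nonneg_left (abs_mulVec_apply_le_of_mulVec_eq_zero hMA hx i)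
              (abs_nonneg _)
      _ = δ * (∑ i, |p i|) * ∑ j, |x j| := by rw [← Finset.sum_mul]; ring
  rw [hq]
  exact le_of_mul_le_mul_right key hs

end Perturbation

theorem det_sub_inv_smul_vecMulVec_eq_zero {K ι : Type*} [Field K] [Fintype ι] [DecidableEq ι]
    {A : Matrix ι ι K} (hA : IsUnit A.det) {y z : ι → K} (hq : z ⬝ᵥ A⁻¹ *ᵥ y ≠ 0) :
    (A - (z ⬝ᵥ A⁻¹ *ᵥ y)⁻¹ • vecMulVec y z).det = 0 := by
  refine exists_mulVec_eq_zero_iff.mp ⟨A⁻¹ *ᵥ y, fun h => hq (by rw [h, dotProduct_zero]), ?_⟩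
  rw [sub_mulVec, mulVec_mulVec, mul_nonsing_inv A hA, one_mulVec, smul_mulVec,
    vecMulVec_mulVec, op_smul_eq_smul, smul_smul, inv_mul_cancel₀ hq, one_smul, sub_self]

section RegRad

variable {n : ℕ} {A Δ : Matrix (Fin n) (Fin n) ℝ}

theorem exists_det_eq_zero_of_regRad_ne_top (h : regRad A Δ ≠ ⊤) :
    ∃ (δ : ℝ≥0) (M : Matrix (Fin n) (Fin n) ℝ),
      (∀ i j, |M i j - A i j| ≤ (δ : ℝ) * Δ i j) ∧ M.det = 0 := by
  by_contra! hS
  exact h (iInf₂_eq_top.mpr fun δ ⟨M, hMA, hM⟩ => absurd hM (hS δ M hMA))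

theorem toReal_regRad_eq {r : ℝ} (hr : 0 ≤ r) {M : Matrix (Fin n) (Fin n) ℝ}
    (hMA : ∀ i j, |M i j - A i j| ≤ r * Δ i j) (hM : M.det = 0)
    (hmin : ∀ (δ : ℝ≥0) (N : Matrix (Fin n) (Fin n) ℝ),
      (∀ i j, |N i j - A i j| ≤ (δ : ℝ) * Δ i j) → N.det = 0 → r ≤ δ) :
    (regRad A Δ).toReal = r := by
  have hreg : regRad A Δ = (r.toNNReal : ℝ≥0∞) := by
    refine le_antisymm (iInf₂_le _ ⟨M, by rwa [Real.coe_toNNReal r hr], hM⟩) ?_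
    exact le_iInf₂ fun δ ⟨N, hNA, hN⟩ =>
      ENNReal.coe_le_coe.mpr (Real.toNNReal_le_iff_le_coe.mpr (hmin δ N hNA hN))
  rw [hreg, ENNReal.coe_toReal, Real.coe_toNNReal r hr]

end RegRad

theorem nearest_singular_sign_form {n : ℕ} (A : Matrix (Fin n) (Fin n) ℝ)
    (hA : A.det ≠ 0)
    (hfin : regRad A (Matrix.of fun _ _ => (1 : ℝ)) ≠ ⊤) :
    ∃ y z : Fin n → ℝ, (∀ i, y i = 1 ∨ y i = -1) ∧ (∀ i, z i = 1 ∨ z i = -1) ∧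
      (A - (regRad A (Matrix.of fun _ _ => (1 : ℝ))).toReal • Matrix.vecMulVec y z).det
        = 0 := by
  have hA : IsUnit A.det := hA.isUnit
  obtain ⟨⟨y, z⟩, ⟨hy, hz⟩, hmax⟩ := Set.exists_max_image _ (fun yz => yz.2 ⬝ᵥ A⁻¹ *ᵥ yz.1)
    (finite_setOf_isSignVector.prod finite_setOf_isSignVector)
    ⟨(fun _ => 1, fun _ => 1), fun _ => .inl rfl, fun _ => .inl rfl⟩
  set q := z ⬝ᵥ A⁻¹ *ᵥ y
  have hbound : ∀ (δ : ℝ≥0) (M : Matrix (Fin n) (Fin n) ℝ),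
      (∀ i j, |M i j - A i j| ≤ (δ : ℝ) * (of fun _ _ => (1 : ℝ)) i j) → M.det = 0 →
        1 ≤ δ * q := fun δ M hMA hM => by
    simp only [of_apply, mul_one] at hMA
    obtain ⟨y', z', hy', hz', h⟩ := exists_isSignVector_one_le_mul_dotProduct hA hM hMA
    exact h.trans (mul_le_mul_of_nonneg_left (hmax (y', z') ⟨hy', hz'⟩) δ.2)
  obtain ⟨δ₀, M₀, hM₀A, hM₀⟩ := exists_det_eq_zero_of_regRad_ne_top hfin
  have hq : 0 < q := pos_of_mul_pos_right (one_pos.trans_le (hbound δ₀ M₀ hM₀A hM₀)) δ₀.2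
  have hsing := det_sub_inv_smul_vecMulVec_eq_zero hA hq.ne'
  have hd : (regRad A (of fun _ _ => (1 : ℝ))).toReal = q⁻¹ := by
    refine toReal_regRad_eq (inv_nonneg.mpr hq.le) (fun i j => ?_) hsing
      fun δ M hMA hM => (inv_le_iff_one_le_mul₀ hq).mpr (hbound δ M hMA hM)
    rw [Matrix.sub_apply, sub_sub_cancel_left, abs_neg, Matrix.smul_apply, smul_eq_mul, abs_mul,
      abs_vecMulVec_apply hy hz, abs_of_pos (inv_pos.mpr hq), of_apply]
  exact ⟨y, z, hy, hz, hd ▸ hsing⟩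
end
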